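/- arXiv:2210.09568 — 3 statements merged into one kernel-verified Lean document; each statement's English description precedes it below -/
import Mathlib

section
/- Let m and n be integers with m ≥ 1 and n ≥ m + 2, and let ρ, μ, ε be real numbers. Let I ⊆ ℝ be a nonempty open interval and let φ : ℝ → ℝ be twice continuously differentiable on I, positive on I, and nonconstant on I. If for all t ∈ I one has (n − m)·φ''(t) = (μ − ρ)·φ(t) and (φ'(t))² = ε − ((m·μ + (n − 2m)·ρ)/((n − m)·(n − m − 1)))·φ(t)², then (n − 1)·μ = (m − 1)·ρ. -/
/-! By (f2), `φ'² + C φ²` is constant (equal to `ε`) on `I`, so differentiating gives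
`φ' (φ'' + C φ) = 0`. Since `φ` is nonconstant, `φ'` is nonzero at some point, and there
`φ'' = -C φ`; comparing with (f1) and cancelling `φ > 0` yields `μ - ρ = -(n - m) C`, which
rearranges to `(n - 1) μ = (m - 1) ρ`. -/

open Topology

theorem deriv_deriv_eq_neg_mul_of_sq_deriv_add_mul_sq_eventuallyEq {f : ℝ → ℝ} {C ε t : ℝ}
    (hf : DifferentiableAt ℝ f t) (hf' : DifferentiableAt ℝ (deriv f) t)
    (hconst : (fun s => deriv f s ^ 2 + C * f s ^ 2) =ᶠ[𝓝 t] fun _ => ε)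
    (hne : deriv f t ≠ 0) :
    deriv (deriv f) t = -C * f t := by
  have hderiv : HasDerivAt (fun s => deriv f s ^ 2 + C * f s ^ 2)
      (2 * deriv f t * deriv (deriv f) t + C * (2 * f t * deriv f t)) t :=
    ((hf'.hasDerivAt.fun_pow 2).add ((hf.hasDerivAt.fun_pow 2).const_mul C)).congr_deriv
      (by ring)
  have hzero : HasDerivAt (fun s => deriv f s ^ 2 + C * f s ^ 2) 0 t :=
    hconst.hasDerivAt_iff.mpr (hasDerivAt_const t ε)
  have hprod : deriv f t * (deriv (deriv f) t + C * f t) = 0 := by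
    linear_combination hderiv.unique hzero / 2
  linear_combination (mul_eq_zero.mp hprod).resolve_left hne

theorem exists_deriv_ne_zero_of_ne {f : ℝ → ℝ} {s : Set ℝ} (hs : IsOpen s)
    (hs' : IsPreconnected s) (hf : DifferentiableOn ℝ f s) {x y : ℝ} (hx : x ∈ s) (hy : y ∈ s)
    (hxy : f x ≠ f y) :
    ∃ t ∈ s, deriv f t ≠ 0 := by
  by_contra! h
  exact hxy (hs.is_const_of_deriv_eq_zero hs' hf h hx hy)

theorem einstein_constants_relation_general
    (m n : ℤ) (hn : m + 2 ≤ n) (ρ μ ε : ℝ)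
    (I : Set ℝ) (hIopen : IsOpen I) (hIconn : I.OrdConnected)
    (φ : ℝ → ℝ) (hφ : ContDiffOn ℝ 2 φ I)
    (hpos : ∀ t ∈ I, 0 < φ t)
    (hnc : ∃ t₁ ∈ I, ∃ t₂ ∈ I, φ t₁ ≠ φ t₂)
    (hf1 : ∀ t ∈ I, ((n : ℝ) - m) * deriv (deriv φ) t = (μ - ρ) * φ t)
    (hf2 : ∀ t ∈ I, (deriv φ t) ^ 2 =
      ε - ((m * μ + ((n : ℝ) - 2 * m) * ρ) / (((n : ℝ) - m) * ((n : ℝ) - m - 1)))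
        * (φ t) ^ 2) :
    ((n : ℝ) - 1) * μ = ((m : ℝ) - 1) * ρ := by
  set C := (m * μ + ((n : ℝ) - 2 * m) * ρ) / (((n : ℝ) - m) * ((n : ℝ) - m - 1)) with hC
  have hφ' : DifferentiableOn ℝ φ I := hφ.differentiableOn (by norm_num)
  have hφ'' : DifferentiableOn ℝ (deriv φ) I :=
    (hφ.deriv_of_isOpen (m := 1) hIopen (by norm_num)).differentiableOn (by norm_num)
  obtain ⟨t₁, ht₁, t₂, ht₂, hφne⟩ := hnc
  obtain ⟨t, ht, hne⟩ :=
    exists_deriv_ne_zero_of_ne hIopen hIconn.isPreconnected hφ' ht₁ ht₂ hφne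
  have hI : I ∈ 𝓝 t := hIopen.mem_nhds ht
  have hφ''t : deriv (deriv φ) t = -C * φ t :=
    deriv_deriv_eq_neg_mul_of_sq_deriv_add_mul_sq_eventuallyEq (ε := ε)
      (hφ'.differentiableAt hI) (hφ''.differentiableAt hI)
      (by filter_upwards [hI] with s hs using by linear_combination hf2 s hs) hne
  have hμρ : μ - ρ = -((n : ℝ) - m) * C := by
    refine mul_right_cancel₀ (hpos t ht).ne' ?_
    linear_combination -(hf1 t ht) + ((n : ℝ) - m) * hφ''t
  have hnm : (m : ℝ) + 2 ≤ n := by exact_mod_cast hn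
  have hnm₁ : (n : ℝ) - m - 1 ≠ 0 := by linarith
  have hnm₀ : (n : ℝ) - m ≠ 0 := by linarith
  rw [hC] at hμρ
  field_simp at hμρ
  linear_combination hμρ

/-- Equation (rel) in the proof of Proposition 2: for a warping function `φ`
satisfying the Einstein warped-product ODEs (f1) and (f2) on a nonempty open
interval `I`, positive and nonconstant on `I`, the Einstein constants satisfy
`(n − 1)·μ = (m − 1)·ρ`. -/
theorem einstein_constants_relation
    (m n : ℤ) (hm : 1 ≤ m) (hn : m + 2 ≤ n) (ρ μ ε : ℝ)
    (I : Set ℝ) (hIopen : IsOpen I) (hIconn : I.OrdConnected) (hIne : I.Nonempty)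
    (φ : ℝ → ℝ) (hφ : ContDiffOn ℝ 2 φ I)
    (hpos : ∀ t ∈ I, 0 < φ t)
    (hnc : ∃ t₁ ∈ I, ∃ t₂ ∈ I, φ t₁ ≠ φ t₂)
    (hf1 : ∀ t ∈ I, ((n : ℝ) - m) * deriv (deriv φ) t = (μ - ρ) * φ t)
    (hf2 : ∀ t ∈ I, (deriv φ t) ^ 2 =
      ε - ((m * μ + ((n : ℝ) - 2 * m) * ρ) / (((n : ℝ) - m) * ((n : ℝ) - m - 1)))
        * (φ t) ^ 2) :
    ((n : ℝ) - 1) * μ = ((m : ℝ) - 1) * ρ :=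
  einstein_constants_relation_general m n hn ρ μ ε I hIopen hIconn φ hφ hpos hnc hf1 hf2
end

section
/- Let n ≥ 2 be an integer, ρ > 0 a real number, ε ∈ {−1, 0, 1}, and I ⊆ ℝ a nonempty open interval. Let φ : ℝ → ℝ be twice continuously differentiable on I and positive on I, such that (n − 1)·φ''(t) + ρ·φ(t) = 0 and (φ'(t))² = ε − (ρ/(n − 1))·φ(t)² for all t ∈ I. Then ε = 1 and there exist real numbers a, b with a² + b² = (n − 1)/ρ such that φ(t) = a·cos(t·√(ρ/(n − 1))) + b·sin(t·√(ρ/(n − 1))) for all t ∈ I. -/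
/-!
On `I` the warping function solves `φ'' = -ω² φ` with `ω = √(ρ/(n-1))`. Rotating the phase-plane
point `(φ, φ'/ω)` by the angle `-ωt` gives a pair `(a, b)` whose derivative vanishes, hence is
constant on the interval, and rotating back yields `φ t = a cos (ωt) + b sin (ωt)` with
`a² + b² = φ² + (φ'/ω)²`. By (f2r) this amplitude is `ε/ω²`; positivity of `φ` forces `ε > 0`,
so `ε = 1` and `a² + b² = 1/ω² = (n-1)/ρ`.
-/

open Real

section HarmonicOscillator

variable {f f' : ℝ → ℝ} {s : Set ℝ} {ω : ℝ}

theorem hasDerivAt_cos_sub_sin_of_harmonic {t : ℝ} (hω : ω ≠ 0) (hf : HasDerivAt f (f' t) t)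
    (hf' : HasDerivAt f' (-(ω ^ 2 * f t)) t) :
    HasDerivAt (fun t => f t * cos (t * ω) - f' t / ω * sin (t * ω)) 0 t := by
  have hθ : HasDerivAt (fun t => t * ω) ω t := by simpa using (hasDerivAt_id t).mul_const ω
  refine ((hf.mul hθ.cos).sub ((hf'.div_const ω).mul hθ.sin)).congr_deriv ?_
  field_simp
  ring

theorem hasDerivAt_sin_add_cos_of_harmonic {t : ℝ} (hω : ω ≠ 0) (hf : HasDerivAt f (f' t) t)
    (hf' : HasDerivAt f' (-(ω ^ 2 * f t)) t) :
    HasDerivAt (fun t => f t * sin (t * ω) + f' t / ω * cos (t * ω)) 0 t := by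
  have hθ : HasDerivAt (fun t => t * ω) ω t := by simpa using (hasDerivAt_id t).mul_const ω
  refine ((hf.mul hθ.sin).add ((hf'.div_const ω).mul hθ.cos)).congr_deriv ?_
  field_simp
  ring

theorem IsOpen.exists_eq_of_hasDerivAt_zero {g : ℝ → ℝ} (hs : IsOpen s) (hs' : IsPreconnected s)
    (hg : ∀ t ∈ s, HasDerivAt g 0 t) : ∃ c, ∀ t ∈ s, g t = c :=
  hs.exists_is_const_of_deriv_eq_zero hs'
    (fun t ht => (hg t ht).differentiableAt.differentiableWithinAt) fun t ht => (hg t ht).deriv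

theorem IsOpen.exists_cos_sin_of_harmonic (hs : IsOpen s) (hs' : IsPreconnected s) (hω : ω ≠ 0)
    (hf : ∀ t ∈ s, HasDerivAt f (f' t) t) (hf' : ∀ t ∈ s, HasDerivAt f' (-(ω ^ 2 * f t)) t) :
    ∃ a b : ℝ, ∀ t ∈ s,
      f t = a * cos (t * ω) + b * sin (t * ω) ∧ a ^ 2 + b ^ 2 = f t ^ 2 + (f' t / ω) ^ 2 := by
  obtain ⟨a, ha⟩ := hs.exists_eq_of_hasDerivAt_zero hs' fun t ht =>
    hasDerivAt_cos_sub_sin_of_harmonic hω (hf t ht) (hf' t ht)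
  obtain ⟨b, hb⟩ := hs.exists_eq_of_hasDerivAt_zero hs' fun t ht =>
    hasDerivAt_sin_add_cos_of_harmonic hω (hf t ht) (hf' t ht)
  refine ⟨a, b, fun t ht => ?_⟩
  have hpyth := sin_sq_add_cos_sq (t * ω)
  rw [← ha t ht, ← hb t ht]
  constructor
  · linear_combination -f t * hpyth
  · linear_combination (f t ^ 2 + (f' t / ω) ^ 2) * hpyth

end HarmonicOscillator

theorem ContDiffOn.hasDerivAt_deriv_deriv {𝕜 : Type*} [NontriviallyNormedField 𝕜] {f : 𝕜 → 𝕜}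
    {s : Set 𝕜} {x : 𝕜} (hf : ContDiffOn 𝕜 2 f s) (hs : IsOpen s) (hx : x ∈ s) :
    HasDerivAt (deriv f) (deriv (deriv f) x) x :=
  (((hf.deriv_of_isOpen hs (m := 1) (by norm_num)).differentiableOn one_ne_zero).differentiableAt
    (hs.mem_nhds hx)).hasDerivAt

theorem eq_one_of_mem_of_pos {ε : ℝ} (hε : ε ∈ ({-1, 0, 1} : Set ℝ)) (h : 0 < ε) : ε = 1 := by
  rcases hε with rfl | rfl | rfl <;> linarith

/-- Case (ii) of Proposition 2 (the case `ρ > 0`): a positive solution of the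
reduced warping-function equations forces `ε = 1` and is an explicit
trigonometric function with `a² + b² = (n − 1)/ρ`. -/
theorem positive_ricci_warping_function
    (n : ℤ) (hn : 2 ≤ n) (ρ : ℝ) (hρ : 0 < ρ)
    (ε : ℝ) (hε : ε ∈ ({-1, 0, 1} : Set ℝ))
    (I : Set ℝ) (hIopen : IsOpen I) (hIconn : I.OrdConnected) (hIne : I.Nonempty)
    (φ : ℝ → ℝ) (hφ : ContDiffOn ℝ 2 φ I)
    (hpos : ∀ t ∈ I, 0 < φ t)
    (hf1r : ∀ t ∈ I, ((n : ℝ) - 1) * deriv (deriv φ) t + ρ * φ t = 0)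
    (hf2r : ∀ t ∈ I, (deriv φ t) ^ 2 = ε - (ρ / ((n : ℝ) - 1)) * (φ t) ^ 2) :
    ε = 1 ∧ ∃ a b : ℝ, a ^ 2 + b ^ 2 = ((n : ℝ) - 1) / ρ ∧
      ∀ t ∈ I, φ t = a * Real.cos (t * Real.sqrt (ρ / ((n : ℝ) - 1)))
        + b * Real.sin (t * Real.sqrt (ρ / ((n : ℝ) - 1))) := by
  obtain ⟨t₀, ht₀⟩ := hIne
  have hn₁ : (0 : ℝ) < n - 1 := by
    have : (2 : ℝ) ≤ n := by exact_mod_cast hn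
    linarith
  have hk : 0 < ρ / ((n : ℝ) - 1) := div_pos hρ hn₁
  set ω := √(ρ / ((n : ℝ) - 1))
  have hω : ω ≠ 0 := (sqrt_pos.2 hk).ne'
  have hω₂ : ω ^ 2 = ρ / ((n : ℝ) - 1) := sq_sqrt hk.le
  have hφ' : ∀ t ∈ I, HasDerivAt φ (deriv φ t) t := fun t ht =>
    ((hφ.differentiableOn two_ne_zero).differentiableAt (hIopen.mem_nhds ht)).hasDerivAt
  have hφ'' : ∀ t ∈ I, HasDerivAt (deriv φ) (-(ω ^ 2 * φ t)) t := fun t ht =>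
    (hφ.hasDerivAt_deriv_deriv hIopen ht).congr_deriv <| by
      rw [hω₂]
      field_simp
      linear_combination hf1r t ht
  obtain ⟨a, b, hab⟩ := hIopen.exists_cos_sin_of_harmonic hIconn.isPreconnected hω hφ' hφ''
  have hε₁ : ε = 1 := eq_one_of_mem_of_pos hε <| by
    linarith [hf2r t₀ ht₀, sq_nonneg (deriv φ t₀), mul_pos hk (pow_pos (hpos t₀ ht₀) 2)]
  refine ⟨hε₁, a, b, ?_, fun t ht => (hab t ht).1⟩
  rw [(hab t₀ ht₀).2, div_pow, hω₂, hf2r t₀ ht₀, hε₁]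
  field_simp
  ring
end

section
/- Let a > 0 and let u : ℝ → ℝ be differentiable with 0 < u(s) ≤ a for all s ∈ ℝ, and suppose that (u'(s))² = 1 − (u(s))²/a² for every s ∈ ℝ with u(s) < a. Then u(s) = a for all s ∈ ℝ. -/
/-!
Where `u < a` the equation forces `u' ≠ 0`, so by Darboux's theorem `u'` keeps its sign as long
as `u` stays below `a`; reflecting `s ↦ -s` if necessary, we may take `u'(s₀) < 0`. Then `u`
decreases from `s₀` on and never returns to `a`, so for `s ≥ s₀` we get
`(u')² ≥ 1 - u(s₀)²/a² =: c > 0`, and since `(u')² ≤ 1` also `u' ≤ -c`. Thus `u` decreases at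
least linearly and eventually becomes nonpositive.
-/

open Set

theorem Convex.deriv_neg_of_deriv_ne_zero {f : ℝ → ℝ} (hf : Differentiable ℝ f) {D : Set ℝ}
    (hD : Convex ℝ D) (hne : ∀ x ∈ D, deriv f x ≠ 0) {x₀ : ℝ} (hx₀ : x₀ ∈ D)
    (hneg : deriv f x₀ < 0) : ∀ x ∈ D, deriv f x < 0 :=
  (hasDerivWithinAt_forall_lt_or_forall_gt_of_forall_ne hD
    (fun x _ => (hf x).hasDerivAt.hasDerivWithinAt) hne).resolve_right
    fun h => (h x₀ hx₀).not_gt hneg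

theorem lt_of_deriv_ne_zero_of_deriv_neg {f : ℝ → ℝ} (hf : Differentiable ℝ f) {a s₀ : ℝ}
    (hne : ∀ t, f t < a → deriv f t ≠ 0) (h₀ : f s₀ < a) (hd₀ : deriv f s₀ < 0)
    {t : ℝ} (ht : s₀ ≤ t) : f t < a := by
  by_contra! hat
  set S := Ici s₀ ∩ {r | a ≤ f r}
  obtain ⟨T, ⟨hT, haT : a ≤ f T⟩, hTmin⟩ : ∃ T, IsLeast S T :=
    ⟨_, (isClosed_Ici.inter (isClosed_le continuous_const hf.continuous)).isLeast_csInf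
      ⟨t, ht, hat⟩ ⟨s₀, fun r hr => hr.1⟩⟩
  have hs₀T : s₀ < T := hT.lt_of_ne (by rintro rfl; exact h₀.not_ge haT)
  have hbefore : ∀ r ∈ Ico s₀ T, f r < a := fun r hr =>
    not_le.1 fun h => (hTmin ⟨hr.1, h⟩).not_gt hr.2
  have hderiv : ∀ r ∈ Ico s₀ T, deriv f r < 0 :=
    (convex_Ico s₀ T).deriv_neg_of_deriv_ne_zero hf (fun r hr => hne r (hbefore r hr))
      (left_mem_Ico.2 hs₀T) hd₀
  have hanti : AntitoneOn f (Icc s₀ T) :=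
    antitoneOn_of_deriv_nonpos (convex_Icc s₀ T) hf.continuous.continuousOn hf.differentiableOn
      fun r hr => (hderiv r (Ioo_subset_Ico_self (by rwa [interior_Icc] at hr))).le
  linarith [hanti (left_mem_Icc.2 hs₀T.le) (right_mem_Icc.2 hs₀T.le) hs₀T.le]

theorem exists_nonpos_of_deriv_le_neg {f : ℝ → ℝ} (hf : Differentiable ℝ f) {s₀ c : ℝ}
    (hc : 0 < c) (hd : ∀ t, s₀ ≤ t → deriv f t ≤ -c) : ∃ t, f t ≤ 0 := by
  refine ⟨s₀ + |f s₀| / c, ?_⟩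
  have hle : s₀ ≤ s₀ + |f s₀| / c := le_add_of_nonneg_right (by positivity)
  have := (convex_Ici s₀).image_sub_le_mul_sub_of_deriv_le hf.continuous.continuousOn
    hf.differentiableOn (fun t ht => hd t (interior_subset ht)) s₀ self_mem_Ici _ hle hle
  rw [add_sub_cancel_left, neg_mul, mul_div_cancel₀ _ hc.ne'] at this
  linarith [le_abs_self (f s₀)]

section

variable {u : ℝ → ℝ} {a : ℝ}

theorem deriv_ne_zero_of_deriv_sq_eq (hpos : ∀ s, 0 < u s)
    (heq : ∀ s, u s < a → deriv u s ^ 2 = 1 - u s ^ 2 / a ^ 2) {s : ℝ} (hs : u s < a) :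
    deriv u s ≠ 0 := by
  have ha : 0 < a := (hpos s).trans hs
  intro h
  have := heq s hs
  rw [h, zero_pow two_ne_zero, eq_comm, sub_eq_zero, eq_comm,
    div_eq_one_iff_eq (by positivity)] at this
  nlinarith [hpos s]

theorem not_deriv_neg_of_deriv_sq_eq (hu : Differentiable ℝ u) (hpos : ∀ s, 0 < u s)
    (heq : ∀ s, u s < a → deriv u s ^ 2 = 1 - u s ^ 2 / a ^ 2) {s₀ : ℝ} (h₀ : u s₀ < a) :
    ¬ deriv u s₀ < 0 := by
  intro hd₀
  have hne : ∀ t, u t < a → deriv u t ≠ 0 := fun t => deriv_ne_zero_of_deriv_sq_eq hpos heq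
  have hlt : ∀ t, s₀ ≤ t → u t < a := fun t => lt_of_deriv_ne_zero_of_deriv_neg hu hne h₀ hd₀
  have hderiv : ∀ t ∈ Ici s₀, deriv u t < 0 :=
    (convex_Ici s₀).deriv_neg_of_deriv_ne_zero hu (fun t ht => hne t (hlt t ht)) self_mem_Ici hd₀
  have hanti : AntitoneOn u (Ici s₀) :=
    antitoneOn_of_deriv_nonpos (convex_Ici s₀) hu.continuous.continuousOn hu.differentiableOn
      fun t ht => (hderiv t (interior_subset ht)).le
  have ha : 0 < a := (hpos s₀).trans h₀
  have hc : 0 < 1 - u s₀ ^ 2 / a ^ 2 := by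
    rw [sub_pos, div_lt_one (by positivity)]
    nlinarith [hpos s₀]
  obtain ⟨t, ht⟩ := exists_nonpos_of_deriv_le_neg hu hc fun t ht => by
    have hsq := heq t (hlt t ht)
    have hdecay : u t ^ 2 / a ^ 2 ≤ u s₀ ^ 2 / a ^ 2 := by
      gcongr
      exacts [(hpos t).le, hanti self_mem_Ici ht ht]
    nlinarith [hderiv t ht, div_nonneg (sq_nonneg (u t)) (sq_nonneg a)]
  exact (hpos t).not_ge ht

theorem le_of_deriv_sq_eq (hu : Differentiable ℝ u) (hpos : ∀ s, 0 < u s)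
    (heq : ∀ s, u s < a → deriv u s ^ 2 = 1 - u s ^ 2 / a ^ 2) (s : ℝ) : a ≤ u s := by
  by_contra! hs
  rcases (deriv_ne_zero_of_deriv_sq_eq hpos heq hs).lt_or_gt with hd | hd
  · exact not_deriv_neg_of_deriv_sq_eq hu hpos heq hs hd
  · refine not_deriv_neg_of_deriv_sq_eq (u := fun t => u (-t)) (s₀ := -s)
      (hu.comp differentiable_neg) (fun t => hpos (-t)) (fun t ht => ?_) (by simpa using hs) ?_
    · rw [deriv_comp_neg, neg_sq]
      exact heq (-t) ht
    · rw [deriv_comp_neg, neg_neg]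
      linarith

end

theorem global_ode_rigidity_general
    (a : ℝ) (u : ℝ → ℝ) (hu : Differentiable ℝ u)
    (hpos : ∀ s : ℝ, 0 < u s) (hle : ∀ s : ℝ, u s ≤ a)
    (heq : ∀ s : ℝ, u s < a → (deriv u s) ^ 2 = 1 - (u s) ^ 2 / a ^ 2) :
    ∀ s : ℝ, u s = a :=
  fun s => (hle s).antisymm (le_of_deriv_sq_eq hu hpos heq s)

/-- Global ODE rigidity lemma from the proof of Theorem 2: a differentiable
function `u : ℝ → ℝ` with `0 < u ≤ a` everywhere, satisfying
`(u')² = 1 − u²/a²` wherever `u < a`, must be identically equal to `a`. -/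
theorem global_ode_rigidity
    (a : ℝ) (ha : 0 < a) (u : ℝ → ℝ) (hu : Differentiable ℝ u)
    (hpos : ∀ s : ℝ, 0 < u s) (hle : ∀ s : ℝ, u s ≤ a)
    (heq : ∀ s : ℝ, u s < a → (deriv u s) ^ 2 = 1 - (u s) ^ 2 / a ^ 2) :
    ∀ s : ℝ, u s = a :=
  global_ode_rigidity_general a u hu hpos hle heq
end
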